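/- For the Douglas functional A on maps g : S¹ → ℝⁿ, precomposition with a Möbius transformation of the disc restricted to the boundary preserves the value of A: if φ is the boundary homeomorphism induced by a conformal automorphism of the unit disc, then A(g ∘ φ) = A(g). -/

import Mathlib

/-
On the circle, the Möbius map `M z = e^{iα}(z - a)/(1 - ā z)` lifts to an increasing
angle map `Θ` with `Θ(θ + 2π) = Θ(θ) + 2π`, namely `Θ θ = α + θ - 2 arg(1 - ā e^{iθ})`, whose
derivative is the Poisson-type density `ρ θ = (1 - |a|²)/|1 - ā e^{iθ}|²`. The identity
`M z - M w = e^{iα}(1 - |a|²)(z - w)/((1 - ā z)(1 - ā w))` shows that the Douglas kernel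
`|g(e^{iθ}) - g(e^{iφ})|² / |e^{iθ} - e^{iφ}|²` of `g ∘ M` at `(θ, φ)` equals `ρ θ ρ φ` times the
kernel of `g` at `(Θ θ, Θ φ)`. Changing variables `θ ↦ Θ θ` in both integrals, and using
`2π`-periodicity of the kernel to move the shifted interval back to `[0, 2π]`, gives the claim.
-/

open Real MeasureTheory Metric
open scoped ENNReal

/-- The Douglas A-functional of a map g defined on the unit circle in ℂ, valued in
[0,∞], expressed via the angle parameterisation θ ↦ e^{iθ}. -/
noncomputable def douglasACircle {n : ℕ} (g : ℂ → EuclideanSpace ℝ (Fin n)) : ℝ≥0∞ :=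
  ENNReal.ofReal (1 / (4 * π)) *
    ∫⁻ θ in Set.Icc (0:ℝ) (2 * π), ∫⁻ φ in Set.Icc (0:ℝ) (2 * π),
      ENNReal.ofReal
        (‖g (Complex.exp (θ * Complex.I)) - g (Complex.exp (φ * Complex.I))‖ ^ 2 /
          (4 * Real.sin ((θ - φ) / 2) ^ 2))

open Set Function Complex ComplexConjugate

theorem Function.Periodic.setLIntegral_Ioc_add_eq {f : ℝ → ℝ≥0∞} {T : ℝ} (hf : Periodic f T)
    (hT : 0 < T) (t s : ℝ) :
    ∫⁻ x in Ioc t (t + T), f x = ∫⁻ x in Ioc s (s + T), f x := by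
  have : VAddInvariantMeasure (AddSubgroup.zmultiples T) ℝ volume :=
    ⟨fun c s _ => measure_preimage_add _ _ _⟩
  exact IsAddFundamentalDomain.setLIntegral_eq (G := AddSubgroup.zmultiples T)
    (isAddFundamentalDomain_Ioc hT t) (isAddFundamentalDomain_Ioc hT s) f hf.map_vadd_zmultiples

theorem Function.Periodic.setLIntegral_Icc_add_eq {f : ℝ → ℝ≥0∞} {T : ℝ} (hf : Periodic f T)
    (hT : 0 < T) (t s : ℝ) :
    ∫⁻ x in Icc t (t + T), f x = ∫⁻ x in Icc s (s + T), f x := by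
  simp only [← setLIntegral_congr Ioc_ae_eq_Icc, hf.setLIntegral_Ioc_add_eq hT t s]

section CircleLift

variable {Θ ρ : ℝ → ℝ} {T : ℝ}

/-- Change of variables along the lift `Θ` of an orientation-preserving circle map. -/
theorem setLIntegral_Icc_deriv_mul_comp_of_periodic (hT : 0 < T)
    (hΘ : ∀ x, HasDerivAt Θ (ρ x) x) (hmono : Monotone Θ) (hshift : ∀ x, Θ (x + T) = Θ x + T)
    {G : ℝ → ℝ≥0∞} (hG : Periodic G T) :
    ∫⁻ x in Icc 0 T, ENNReal.ofReal (ρ x) * G (Θ x) = ∫⁻ y in Icc 0 T, G y := by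
  have himage : Θ '' Icc 0 T = Icc (Θ 0) (Θ 0 + T) := by
    rw [← hshift, zero_add]
    exact (continuous_iff_continuousAt.2 fun x => (hΘ x).continuousAt).continuousOn
      |>.image_Icc_of_monotoneOn hT.le (hmono.monotoneOn _)
  rw [← lintegral_image_eq_lintegral_deriv_mul_of_monotoneOn measurableSet_Icc
    (fun x _ => (hΘ x).hasDerivWithinAt) (hmono.monotoneOn _), himage,
    hG.setLIntegral_Icc_add_eq hT, zero_add]

theorem setLIntegral_Icc_setLIntegral_Icc_deriv_mul_comp_of_periodic (hT : 0 < T)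
    (hΘ : ∀ x, HasDerivAt Θ (ρ x) x) (hmono : Monotone Θ) (hshift : ∀ x, Θ (x + T) = Θ x + T)
    {K : ℝ → ℝ → ℝ≥0∞} (hK₁ : ∀ y, Periodic (K · y) T) (hK₂ : ∀ x, Periodic (K x) T) :
    ∫⁻ x in Icc 0 T, ∫⁻ y in Icc 0 T,
        ENNReal.ofReal (ρ x) * (ENNReal.ofReal (ρ y) * K (Θ x) (Θ y))
      = ∫⁻ x in Icc 0 T, ∫⁻ y in Icc 0 T, K x y := by
  have hinner (x : ℝ) : ∫⁻ y in Icc 0 T, ENNReal.ofReal (ρ y) * K x (Θ y)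
      = ∫⁻ y in Icc 0 T, K x y :=
    setLIntegral_Icc_deriv_mul_comp_of_periodic hT hΘ hmono hshift (hK₂ x)
  simp_rw [lintegral_const_mul' _ _ ENNReal.ofReal_ne_top, hinner]
  exact setLIntegral_Icc_deriv_mul_comp_of_periodic (G := fun x => ∫⁻ y in Icc 0 T, K x y)
    hT hΘ hmono hshift fun x => lintegral_congr fun y => hK₁ y x

end CircleLift

theorem Complex.normSq_exp_ofReal_mul_I (x : ℝ) : normSq (exp (x * I)) = 1 := by
  rw [← Complex.sq_norm, norm_exp_ofReal_mul_I, one_pow]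

theorem Complex.exp_ofReal_mul_I_mul_conj (x : ℝ) : exp (x * I) * conj (exp (x * I)) = 1 := by
  rw [mul_conj, normSq_exp_ofReal_mul_I, ofReal_one]

theorem Complex.exp_arg_mul_I_sq_mul_conj (z : ℂ) : exp (arg z * I) ^ 2 * conj z = z := by
  have hu := exp_ofReal_mul_I_mul_conj (arg z)
  have h := norm_mul_exp_arg_mul_I z
  have h' := congrArg conj h
  rw [map_mul, conj_ofReal] at h'
  linear_combination (↑‖z‖ * exp (arg z * I)) * hu - exp (arg z * I) ^ 2 * h' + h

theorem Complex.normSq_exp_mul_I_sub_exp_mul_I (x y : ℝ) :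
    normSq (exp (x * I) - exp (y * I)) = 4 * Real.sin ((x - y) / 2) ^ 2 := by
  have h : exp (x * I) - exp (y * I) = exp (y * I) * (exp (I * ↑(x - y)) - 1) := by
    rw [mul_sub, ← Complex.exp_add]; push_cast; ring_nf
  rw [← Complex.sq_norm, h, norm_mul, norm_exp_ofReal_mul_I, one_mul,
    norm_exp_I_mul_ofReal_sub_one, Real.norm_eq_abs, sq_abs]
  ring

theorem Complex.normSq_mobius_sub_mobius (a c z w : ℂ) (hc : normSq c = 1)
    (hz : 1 - conj a * z ≠ 0) (hw : 1 - conj a * w ≠ 0) :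
    normSq (c * (z - a) / (1 - conj a * z) - c * (w - a) / (1 - conj a * w))
      = (1 - normSq a) / normSq (1 - conj a * z) * ((1 - normSq a) / normSq (1 - conj a * w))
        * normSq (z - w) := by
  have hdiff : c * (z - a) / (1 - conj a * z) - c * (w - a) / (1 - conj a * w)
      = c * (1 - conj a * a) * (z - w) / ((1 - conj a * z) * (1 - conj a * w)) := by
    rw [div_sub_div _ _ hz hw]; ring
  rw [hdiff, mul_comm (conj a), mul_conj, ← ofReal_one, ← ofReal_sub]
  simp only [map_div₀, map_mul, hc, normSq_ofReal]
  ring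

theorem Complex.exp_ofReal_add_two_pi_mul_I (θ : ℝ) : exp (↑(θ + 2 * π) * I) = exp (θ * I) := by
  push_cast; exact exp_mul_I_periodic θ

noncomputable def mobiusDenom (a : ℂ) (θ : ℝ) : ℂ := 1 - conj a * exp (θ * I)

/-- The lift to `ℝ` of the boundary map of `z ↦ e^{iα}(z - a)/(1 - ā z)`. -/
noncomputable def mobiusAngle (a : ℂ) (α θ : ℝ) : ℝ := α + θ - 2 * arg (mobiusDenom a θ)

noncomputable def mobiusDensity (a : ℂ) (θ : ℝ) : ℝ :=
  (1 - normSq a) / normSq (mobiusDenom a θ)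

section Mobius

variable {a : ℂ}

theorem mobiusDenom_mem_slitPlane (ha : ‖a‖ < 1) (θ : ℝ) : mobiusDenom a θ ∈ slitPlane := by
  rw [mobiusDenom, sub_eq_add_neg]
  exact mem_slitPlane_of_norm_lt_one (by simpa)

theorem mobiusDenom_ne_zero (ha : ‖a‖ < 1) (θ : ℝ) : mobiusDenom a θ ≠ 0 :=
  slitPlane_ne_zero (mobiusDenom_mem_slitPlane ha θ)

theorem mobiusDenom_add_two_pi (a : ℂ) (θ : ℝ) : mobiusDenom a (θ + 2 * π) = mobiusDenom a θ := by
  rw [mobiusDenom, mobiusDenom, exp_ofReal_add_two_pi_mul_I]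

theorem hasDerivAt_mobiusDenom (a : ℂ) (θ : ℝ) :
    HasDerivAt (mobiusDenom a) (I * (mobiusDenom a θ - 1)) θ := by
  have hexp : HasDerivAt (fun t : ℝ => exp (t * I)) (exp (θ * I) * I) θ :=
    ((hasDerivAt_id θ).ofReal_comp.mul_const I).cexp.congr_deriv (by simp)
  exact (hexp.const_mul (conj a)).const_sub 1 |>.congr_deriv (by simp [mobiusDenom]; ring)

theorem mobiusDensity_pos (ha : ‖a‖ < 1) (θ : ℝ) : 0 < mobiusDensity a θ := by
  have : normSq a < 1 := by rw [← Complex.sq_norm]; nlinarith [norm_nonneg a]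
  exact div_pos (by linarith) (normSq_pos.2 (mobiusDenom_ne_zero ha θ))

theorem exp_mobiusAngle_mul_I (ha : ‖a‖ < 1) (α θ : ℝ) :
    exp (mobiusAngle a α θ * I) = exp (α * I) * (exp (θ * I) - a) / mobiusDenom a θ := by
  set A := mobiusDenom a θ
  have hconj : exp (θ * I) * conj A = exp (θ * I) - a := by
    simp only [A, mobiusDenom, map_sub, map_one, map_mul, conj_conj]
    linear_combination (-a) * exp_ofReal_mul_I_mul_conj θ
  have hsplit : exp (mobiusAngle a α θ * I) * exp (arg A * I) ^ 2 = exp (α * I) * exp (θ * I) := by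
    rw [sq, ← Complex.exp_add, ← Complex.exp_add, ← Complex.exp_add]
    congr 1; push_cast [mobiusAngle]; ring
  rw [eq_div_iff (mobiusDenom_ne_zero ha θ)]
  linear_combination -exp (mobiusAngle a α θ * I) * exp_arg_mul_I_sq_mul_conj A
    + conj A * hsplit + exp (α * I) * hconj

theorem hasDerivAt_mobiusAngle (ha : ‖a‖ < 1) (α θ : ℝ) :
    HasDerivAt (mobiusAngle a α) (mobiusDensity a θ) θ := by
  set A := mobiusDenom a θ
  have hslit := mobiusDenom_mem_slitPlane ha θ
  have harg : HasDerivAt (fun t => arg (mobiusDenom a t)) (I * (A - 1) / A).im θ := by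
    simpa [Function.comp_def, log_im] using
      imCLM.hasFDerivAt.comp_hasDerivAt θ ((hasDerivAt_mobiusDenom a θ).clog_real hslit)
  refine (((hasDerivAt_id θ).const_add α).sub (harg.const_mul 2)).congr_deriv ?_
  have hA : A.re ^ 2 + A.im ^ 2 ≠ 0 := by
    rw [sq, sq, ← normSq_apply]; exact (normSq_pos.2 (slitPlane_ne_zero hslit)).ne'
  have hnum : 2 * A.re - normSq A = 1 - normSq a := by
    have h (w : ℂ) : 2 * (1 - w).re - normSq (1 - w) = 1 - normSq w := by
      simp only [normSq_apply, sub_re, sub_im, one_re, one_im]; ring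
    rw [show A = 1 - conj a * exp (θ * I) from rfl, h, map_mul, normSq_conj,
      normSq_exp_ofReal_mul_I, mul_one]
  rw [mobiusDensity, ← hnum, div_im, normSq_apply]
  simp only [mul_re, mul_im, I_re, I_im, sub_re, sub_im, one_re, one_im]
  field_simp
  ring

theorem mobiusAngle_strictMono (ha : ‖a‖ < 1) (α : ℝ) : StrictMono (mobiusAngle a α) :=
  strictMono_of_deriv_pos fun θ => by
    rw [(hasDerivAt_mobiusAngle ha α θ).deriv]; exact mobiusDensity_pos ha θ

theorem mobiusAngle_add_two_pi (a : ℂ) (α θ : ℝ) :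
    mobiusAngle a α (θ + 2 * π) = mobiusAngle a α θ + 2 * π := by
  rw [mobiusAngle, mobiusAngle, mobiusDenom_add_two_pi]; ring

theorem sin_sq_mobiusAngle_sub (ha : ‖a‖ < 1) (α θ φ : ℝ) :
    4 * Real.sin ((mobiusAngle a α θ - mobiusAngle a α φ) / 2) ^ 2
      = mobiusDensity a θ * mobiusDensity a φ * (4 * Real.sin ((θ - φ) / 2) ^ 2) := by
  rw [← normSq_exp_mul_I_sub_exp_mul_I, exp_mobiusAngle_mul_I ha, exp_mobiusAngle_mul_I ha,
    ← normSq_exp_mul_I_sub_exp_mul_I]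
  exact normSq_mobius_sub_mobius a _ _ _ (normSq_exp_ofReal_mul_I α) (mobiusDenom_ne_zero ha θ)
    (mobiusDenom_ne_zero ha φ)

end Mobius

noncomputable def douglasKernel {n : ℕ} (g : ℂ → EuclideanSpace ℝ (Fin n)) (θ φ : ℝ) : ℝ≥0∞ :=
  ENNReal.ofReal (‖g (exp (θ * I)) - g (exp (φ * I))‖ ^ 2 / (4 * Real.sin ((θ - φ) / 2) ^ 2))

section DouglasKernel

variable {n : ℕ} (g : ℂ → EuclideanSpace ℝ (Fin n))

theorem douglasACircle_eq_douglasKernel :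
    douglasACircle g = ENNReal.ofReal (1 / (4 * π)) *
      ∫⁻ θ in Icc 0 (2 * π), ∫⁻ φ in Icc 0 (2 * π), douglasKernel g θ φ :=
  rfl

theorem douglasKernel_comm (θ φ : ℝ) : douglasKernel g θ φ = douglasKernel g φ θ := by
  rw [douglasKernel, douglasKernel, norm_sub_rev, ← neg_sub θ, neg_div, Real.sin_neg, neg_sq]

theorem douglasKernel_periodic (φ : ℝ) : Periodic (douglasKernel g · φ) (2 * π) := by
  intro θ
  simp only [douglasKernel, exp_ofReal_add_two_pi_mul_I, add_sub_right_comm, add_div,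
    show 2 * π / 2 = π by ring, Real.sin_add_pi, neg_sq]

theorem douglasKernel_comp_mobius {a : ℂ} (ha : ‖a‖ < 1) (α θ φ : ℝ) :
    douglasKernel (g ∘ fun z => exp (α * I) * (z - a) / (1 - conj a * z)) θ φ
      = ENNReal.ofReal (mobiusDensity a θ) * (ENNReal.ofReal (mobiusDensity a φ)
          * douglasKernel g (mobiusAngle a α θ) (mobiusAngle a α φ)) := by
  have hρθ := mobiusDensity_pos ha θ
  have hρφ := mobiusDensity_pos ha φ
  rw [douglasKernel, douglasKernel, ← ENNReal.ofReal_mul hρφ.le, ← ENNReal.ofReal_mul hρθ.le,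
    sin_sq_mobiusAngle_sub ha]
  simp only [comp_apply, exp_mobiusAngle_mul_I ha, mobiusDenom]
  congr 1
  field_simp

end DouglasKernel

theorem stmt19_general {n : ℕ} (g : ℂ → EuclideanSpace ℝ (Fin n))
    (a : ℂ) (ha : ‖a‖ < 1) (α : ℝ)
    (M : ℂ → ℂ)
    (hM : ∀ z : ℂ, M z = Complex.exp (α * Complex.I) * (z - a) / (1 - (starRingEnd ℂ) a * z)) :
    douglasACircle (g ∘ M) = douglasACircle g := by
  obtain rfl : M = fun z => exp (α * I) * (z - a) / (1 - conj a * z) := funext hM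
  rw [douglasACircle_eq_douglasKernel, douglasACircle_eq_douglasKernel]
  simp_rw [douglasKernel_comp_mobius g ha]
  rw [setLIntegral_Icc_setLIntegral_Icc_deriv_mul_comp_of_periodic two_pi_pos
    (hasDerivAt_mobiusAngle ha α) (mobiusAngle_strictMono ha α).monotone
    (mobiusAngle_add_two_pi a α) (douglasKernel_periodic g)
    fun θ φ => by simp only [douglasKernel_comm g θ]; exact douglasKernel_periodic g θ φ]

/-- The Douglas functional is invariant under precomposition with the
boundary values of any conformal automorphism z ↦ e^{iα}(z − a)/(1 − ā z) of the
unit disc. -/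
theorem stmt19 {n : ℕ} (g : ℂ → EuclideanSpace ℝ (Fin n)) (hmeas : Measurable g)
    (a : ℂ) (ha : ‖a‖ < 1) (α : ℝ)
    (M : ℂ → ℂ)
    (hM : ∀ z : ℂ, M z = Complex.exp (α * Complex.I) * (z - a) / (1 - (starRingEnd ℂ) a * z)) :
    douglasACircle (g ∘ M) = douglasACircle g :=
  stmt19_general g a ha α M hM
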